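/- Let δ > 0 and a ≥ 0 be real, v ∈ ℝ^{n−1}, M a real symmetric (n−1)×(n−1) matrix, and let S, T be lower triangular (n−1)×(n−1) real matrices satisfying SSᵀ − TTᵀ = M + (1/δ)vvᵀ. Define L₁ = [[√(δ+a), 0], [0, S]] and L₂ = [[√δ, 0], [−v/√δ, T]]. Then L₁ and L₂ are lower triangular and L₁L₁ᵀ − L₂L₂ᵀ = [[a, vᵀ], [v, M]]. -/

import Mathlib

/-!
Both factors are block lower triangular with first column `(c, w)`, so `L Lᵀ` has blocks
`c²`, `c wᵀ`, `c w`, `w wᵀ + S Sᵀ`. With `w = 0` for `L₁` and `w = -v/√δ` for `L₂` the corner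
gives `(δ + a) - δ = a`, the off-diagonal blocks give `v`, and the lower-right block gives
`S Sᵀ - T Tᵀ - vvᵀ/δ = M`.
-/

open Matrix

/-- The natural ordering of the row/column indices of an `n×n` matrix presented in
block form with a `1×1` top-left block and an `(n-1)×(n-1)` bottom-right block. -/
def blockIdx {m : ℕ} : Fin 1 ⊕ Fin m → ℕ := Sum.elim (fun _ => 0) (fun i => (i : ℕ) + 1)

/-- A block matrix is lower triangular if entries above the diagonal
(w.r.t. the natural index order) vanish. -/
def IsLowerTriBlock {m : ℕ} (L : Matrix (Fin 1 ⊕ Fin m) (Fin 1 ⊕ Fin m) ℝ) : Prop :=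
  ∀ i j, blockIdx i < blockIdx j → L i j = 0

theorem isLowerTriBlock_fromBlocks {m : ℕ} (A : Matrix (Fin 1) (Fin 1) ℝ)
    (C : Matrix (Fin m) (Fin 1) ℝ) {D : Matrix (Fin m) (Fin m) ℝ}
    (hD : ∀ i j : Fin m, i < j → D i j = 0) : IsLowerTriBlock (fromBlocks A 0 C D) := by
  rintro (i | i) (j | j) h
  · simp [blockIdx] at h
  · rfl
  · simp [blockIdx] at h
  · exact hD i j (by simpa [blockIdx] using h)

theorem fromBlocks_zero₁₂_mul_transpose_self {l n R : Type*} [Fintype l] [Fintype n]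
    [NonUnitalNonAssocSemiring R] (A : Matrix l l R) (C : Matrix n l R) (D : Matrix n n R) :
    fromBlocks A 0 C D * (fromBlocks A 0 C D)ᵀ =
      fromBlocks (A * Aᵀ) (A * Cᵀ) (C * Aᵀ) (C * Cᵀ + D * Dᵀ) := by
  simp [fromBlocks_transpose, fromBlocks_multiply]

theorem chtwo_step_reg_v1_zero_general (m : ℕ) (δ a : ℝ) (hδ : 0 < δ) (ha : 0 ≤ a)
    (v : Fin m → ℝ)
    (M S T : Matrix (Fin m) (Fin m) ℝ)
    (hS : ∀ i j : Fin m, i < j → S i j = 0)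
    (hT : ∀ i j : Fin m, i < j → T i j = 0)
    (hST : S * Sᵀ - T * Tᵀ = M + (1 / δ) • Matrix.vecMulVec v v) :
    IsLowerTriBlock
      (Matrix.fromBlocks (Matrix.of fun (_ : Fin 1) (_ : Fin 1) => Real.sqrt (δ + a)) 0
        0 S) ∧
    IsLowerTriBlock
      (Matrix.fromBlocks (Matrix.of fun (_ : Fin 1) (_ : Fin 1) => Real.sqrt δ) 0
        (Matrix.of fun i (_ : Fin 1) => -v i / Real.sqrt δ) T) ∧
    (Matrix.fromBlocks (Matrix.of fun (_ : Fin 1) (_ : Fin 1) => Real.sqrt (δ + a)) 0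
        0 S) *
      (Matrix.fromBlocks (Matrix.of fun (_ : Fin 1) (_ : Fin 1) => Real.sqrt (δ + a)) 0
        0 S)ᵀ -
    (Matrix.fromBlocks (Matrix.of fun (_ : Fin 1) (_ : Fin 1) => Real.sqrt δ) 0
        (Matrix.of fun i (_ : Fin 1) => -v i / Real.sqrt δ) T) *
      (Matrix.fromBlocks (Matrix.of fun (_ : Fin 1) (_ : Fin 1) => Real.sqrt δ) 0
        (Matrix.of fun i (_ : Fin 1) => -v i / Real.sqrt δ) T)ᵀ =
      Matrix.fromBlocks (Matrix.of fun (_ : Fin 1) (_ : Fin 1) => a)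
        (Matrix.of fun (_ : Fin 1) j => v j)
        (Matrix.of fun i (_ : Fin 1) => v i) M := by
  refine ⟨isLowerTriBlock_fromBlocks _ _ hS, isLowerTriBlock_fromBlocks _ _ hT, ?_⟩
  have hsqrt : √δ * √δ = δ := Real.mul_self_sqrt hδ.le
  have hsqrt_add : √(δ + a) * √(δ + a) = δ + a := Real.mul_self_sqrt (by linarith)
  have hsqrt_ne : √δ ≠ 0 := (Real.sqrt_pos.mpr hδ).ne'
  rw [fromBlocks_zero₁₂_mul_transpose_self, fromBlocks_zero₁₂_mul_transpose_self,
    sub_eq_iff_eq_add, fromBlocks_add]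
  congr 1
  · ext i j
    simp [mul_apply, hsqrt, hsqrt_add, add_comm]
  · ext i j
    simp [mul_apply, mul_div_cancel₀ _ hsqrt_ne]
  · ext i j
    simp [mul_apply, div_mul_cancel₀ _ hsqrt_ne]
  · have hvv : (of fun i (_ : Fin 1) => -v i / √δ) * (of fun i (_ : Fin 1) => -v i / √δ)ᵀ =
        (1 / δ) • vecMulVec v v := by
      ext i j
      simp only [Matrix.smul_apply, vecMulVec_apply, smul_eq_mul, mul_apply, Fin.sum_univ_one,
        of_apply, transpose_apply]
      rw [div_mul_div_comm, hsqrt]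
      ring
    rw [Matrix.zero_mul, zero_add, hvv, eq_add_of_sub_eq hST, add_assoc]

/-- Regularized difference-of-Cholesky step with the choice `v₁ = 0`: if `δ > 0`,
`a ≥ 0`, and `S`, `T` are lower triangular with `SSᵀ − TTᵀ = M + (1/δ)vvᵀ`, then
`L₁ = [[√(δ+a), 0], [0, S]]` and `L₂ = [[√δ, 0], [−v/√δ, T]]` are lower triangular
and `L₁L₁ᵀ − L₂L₂ᵀ = [[a, vᵀ], [v, M]]`. -/
theorem chtwo_step_reg_v1_zero (m : ℕ) (δ a : ℝ) (hδ : 0 < δ) (ha : 0 ≤ a)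
    (v : Fin m → ℝ)
    (M S T : Matrix (Fin m) (Fin m) ℝ) (hM : M.IsSymm)
    (hS : ∀ i j : Fin m, i < j → S i j = 0)
    (hT : ∀ i j : Fin m, i < j → T i j = 0)
    (hST : S * Sᵀ - T * Tᵀ = M + (1 / δ) • Matrix.vecMulVec v v) :
    IsLowerTriBlock
      (Matrix.fromBlocks (Matrix.of fun (_ : Fin 1) (_ : Fin 1) => Real.sqrt (δ + a)) 0
        0 S) ∧
    IsLowerTriBlock
      (Matrix.fromBlocks (Matrix.of fun (_ : Fin 1) (_ : Fin 1) => Real.sqrt δ) 0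
        (Matrix.of fun i (_ : Fin 1) => -v i / Real.sqrt δ) T) ∧
    (Matrix.fromBlocks (Matrix.of fun (_ : Fin 1) (_ : Fin 1) => Real.sqrt (δ + a)) 0
        0 S) *
      (Matrix.fromBlocks (Matrix.of fun (_ : Fin 1) (_ : Fin 1) => Real.sqrt (δ + a)) 0
        0 S)ᵀ -
    (Matrix.fromBlocks (Matrix.of fun (_ : Fin 1) (_ : Fin 1) => Real.sqrt δ) 0
        (Matrix.of fun i (_ : Fin 1) => -v i / Real.sqrt δ) T) *
      (Matrix.fromBlocks (Matrix.of fun (_ : Fin 1) (_ : Fin 1) => Real.sqrt δ) 0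
        (Matrix.of fun i (_ : Fin 1) => -v i / Real.sqrt δ) T)ᵀ =
      Matrix.fromBlocks (Matrix.of fun (_ : Fin 1) (_ : Fin 1) => a)
        (Matrix.of fun (_ : Fin 1) j => v j)
        (Matrix.of fun i (_ : Fin 1) => v i) M :=
  chtwo_step_reg_v1_zero_general m δ a hδ ha v M S T hS hT hST
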